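/- arXiv:2211.04132 — 3 statements merged into one kernel-verified Lean document; each statement's English description precedes it below -/
import Mathlib

section
/- Let X ∈ ℝ^{l×d}, Y ∈ ℝ^{l×o}, W ∈ ℝ^{d×o} be fixed with ‖Xᵀ‖_F² ≤ ζ², ‖XW − Y‖_F² ≤ κ². Let S be a random diagonal l×l matrix with i.i.d. Bernoulli(b/l) diagonal entries, and g(W) = (l/b)·Xᵀ SᵀS (XW − Y). Then E[‖g(W) − Xᵀ(XW − Y)‖_F²] ≤ (l(l−b)/b)·ζ²κ². -/
open MeasureTheory ProbabilityTheory Matrix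

/-- Squared Frobenius norm of a real matrix. -/
def frobSq {n m : ℕ} (A : Matrix (Fin n) (Fin m) ℝ) : ℝ := ∑ i, ∑ j, (A i j) ^ 2

/-!
Write `E = XW − Y` and `r = l/b`. Since `S` is diagonal with `0/1` entries, `SᵀS = diag(S_jj)`,
so the error of the stochastic gradient is `Xᵀ D E` with `D = diag(r S_jj − 1)`. Submultiplicativity
of the Frobenius norm bounds its square pointwise by `ζ² ‖D‖_F² κ²`, and each `S_jj` is a `0/1`
variable with mean `p = b/l`, so `E[(S_jj/p − 1)²] = 1/p − 1 = (l − b)/b`; summing over the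
`l` diagonal entries gives the bound.
-/

section Frobenius

attribute [local instance] Matrix.frobeniusNormedAddCommGroup

lemma frobSq_eq_norm_sq {n m : ℕ} (A : Matrix (Fin n) (Fin m) ℝ) : frobSq A = ‖A‖ ^ 2 := by
  rw [frobenius_norm_def, ← Real.rpow_natCast, ← Real.rpow_mul (by positivity)]
  norm_num [frobSq]

lemma frobSq_mul_le {n m k : ℕ} (A : Matrix (Fin n) (Fin m) ℝ) (B : Matrix (Fin m) (Fin k) ℝ) :
    frobSq (A * B) ≤ frobSq A * frobSq B := by
  simp only [frobSq_eq_norm_sq, ← mul_pow]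
  exact pow_le_pow_left₀ (norm_nonneg _) (frobenius_norm_mul A B) 2

end Frobenius

lemma frobSq_nonneg {n m : ℕ} (A : Matrix (Fin n) (Fin m) ℝ) : 0 ≤ frobSq A := by
  unfold frobSq; positivity

lemma frobSq_diagonal {n : ℕ} (v : Fin n → ℝ) : frobSq (diagonal v) = ∑ j, v j ^ 2 := by
  unfold frobSq
  refine Finset.sum_congr rfl fun i _ => ?_
  rw [Finset.sum_eq_single i (fun j _ hji => by simp [diagonal_apply_ne _ hji.symm]) (by simp)]
  simp

lemma transpose_mul_self_eq_diagonal_diag {n R : Type*} [Fintype n] [DecidableEq n] [Semiring R]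
    {S : Matrix n n R} (hS : ∀ i j, i ≠ j → S i j = 0) (h01 : ∀ j, S j j = 0 ∨ S j j = 1) :
    Sᵀ * S = diagonal (diag S) := by
  have hSdiag : S = diagonal (diag S) := by
    ext i j
    rcases eq_or_ne i j with rfl | hij
    · simp
    · simp [hS i j hij, diagonal_apply_ne _ hij]
  rw [hSdiag, diagonal_transpose, diagonal_mul_diagonal, diag_diagonal]
  congr 1
  ext j
  rcases h01 j with h | h <;> simp [h]

lemma smul_mul_diagonal_mul_sub {m n k R : Type*} [Fintype n] [DecidableEq n] [CommRing R]
    (A : Matrix m n R) (B : Matrix n k R) (r : R) (s : n → R) :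
    r • (A * diagonal s * B) - A * B = A * diagonal (fun j => r * s j - 1) * B := by
  have : diagonal (fun j => r * s j - 1) = r • diagonal s - 1 := by
    rw [← diagonal_one, ← diagonal_smul, diagonal_sub]; rfl
  rw [this, Matrix.mul_sub, Matrix.sub_mul, Matrix.mul_one, Matrix.mul_smul, Matrix.smul_mul]

section ZeroOne

variable {Ω : Type*} {s : Ω → ℝ}

lemma comp_eq_const_add_indicator (h01 : ∀ ω, s ω = 0 ∨ s ω = 1) (f : ℝ → ℝ) :
    (fun ω => f (s ω)) = fun ω => f 0 + {ω | s ω = 1}.indicator (fun _ => f 1 - f 0) ω := by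
  ext ω
  rcases h01 ω with h | h <;> simp [h]

variable [MeasurableSpace Ω] (μ : Measure Ω) [IsProbabilityMeasure μ]

lemma integrable_comp_of_zero_or_one (hs : Measurable s) (h01 : ∀ ω, s ω = 0 ∨ s ω = 1)
    (f : ℝ → ℝ) : Integrable (fun ω => f (s ω)) μ := by
  rw [comp_eq_const_add_indicator h01]
  exact (integrable_const _).add ((integrable_const _).indicator (hs (measurableSet_singleton 1)))

lemma integral_comp_of_zero_or_one (hs : Measurable s) (h01 : ∀ ω, s ω = 0 ∨ s ω = 1)
    (f : ℝ → ℝ) : ∫ ω, f (s ω) ∂μ = f 0 + μ.real {ω | s ω = 1} * (f 1 - f 0) := by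
  have hA : MeasurableSet {ω | s ω = 1} := hs (measurableSet_singleton 1)
  rw [comp_eq_const_add_indicator h01, integral_add (integrable_const _)
    ((integrable_const _).indicator hA), integral_indicator_const _ hA]
  simp

lemma integral_inv_mul_sub_one_sq (hs : Measurable s) (h01 : ∀ ω, s ω = 0 ∨ s ω = 1) {p : ℝ}
    (hp : μ.real {ω | s ω = 1} = p) (hp0 : p ≠ 0) :
    ∫ ω, (p⁻¹ * s ω - 1) ^ 2 ∂μ = p⁻¹ - 1 := by
  rw [integral_comp_of_zero_or_one μ hs h01 (fun x => (p⁻¹ * x - 1) ^ 2), hp]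
  field_simp
  ring

end ZeroOne

lemma frobSq_smul_mul_diagonal_mul_sub_le {n m k : ℕ} (A : Matrix (Fin n) (Fin m) ℝ)
    (B : Matrix (Fin m) (Fin k) ℝ) (r : ℝ) (s : Fin m → ℝ) :
    frobSq (r • (A * diagonal s * B) - A * B) ≤ frobSq A * (∑ j, (r * s j - 1) ^ 2) * frobSq B := by
  rw [smul_mul_diagonal_mul_sub, ← frobSq_diagonal]
  calc _ ≤ frobSq (A * diagonal fun j => r * s j - 1) * frobSq B := frobSq_mul_le _ _
    _ ≤ _ := by gcongr; exacts [frobSq_nonneg _, frobSq_mul_le _ _]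

theorem stmt7_general {Ω : Type*} [MeasureSpace Ω] [IsProbabilityMeasure (ℙ : Measure Ω)]
    {l d o b : ℕ} (hb : 0 < b)
    (X : Matrix (Fin l) (Fin d) ℝ) (Y : Matrix (Fin l) (Fin o) ℝ)
    (W : Matrix (Fin d) (Fin o) ℝ) (ζ κ : ℝ)
    (hX : frobSq Xᵀ ≤ ζ ^ 2) (hXWY : frobSq (X * W - Y) ≤ κ ^ 2)
    (S : Ω → Matrix (Fin l) (Fin l) ℝ)
    (hmeas : ∀ i j, Measurable fun ω => S ω i j)
    (hdiag : ∀ ω, ∀ i j, i ≠ j → S ω i j = 0)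
    (h01 : ∀ ω j, S ω j j = 0 ∨ S ω j j = 1)
    (hp : ∀ j, ℙ {ω | S ω j j = 1} = ENNReal.ofReal ((b : ℝ) / l)) :
    (∫ ω, frobSq (((l : ℝ) / b) • (Xᵀ * ((S ω)ᵀ * S ω) * (X * W - Y))
        - Xᵀ * (X * W - Y)) ∂ℙ)
      ≤ ((l : ℝ) * ((l : ℝ) - b) / b) * (ζ ^ 2 * κ ^ 2) := by
  set E := X * W - Y
  set err : Ω → ℝ := fun ω => ∑ j, ((l : ℝ) / b * S ω j j - 1) ^ 2
  have hpoint : ∀ ω, frobSq (((l : ℝ) / b) • (Xᵀ * ((S ω)ᵀ * S ω) * E) - Xᵀ * E)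
      ≤ ζ ^ 2 * κ ^ 2 * err ω := by
    intro ω
    rw [transpose_mul_self_eq_diagonal_diag (hdiag ω) (h01 ω)]
    calc _ ≤ frobSq Xᵀ * err ω * frobSq E := frobSq_smul_mul_diagonal_mul_sub_le _ _ _ _
      _ ≤ ζ ^ 2 * err ω * κ ^ 2 := by
        gcongr
        exact frobSq_nonneg E
      _ = ζ ^ 2 * κ ^ 2 * err ω := by ring
  have hint : ∀ j, Integrable (fun ω => ((l : ℝ) / b * S ω j j - 1) ^ 2) ℙ := fun j =>
    integrable_comp_of_zero_or_one ℙ (hmeas j j) (h01 · j) fun x => ((l : ℝ) / b * x - 1) ^ 2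
  have hvar : ∀ j : Fin l, ∫ ω, ((l : ℝ) / b * S ω j j - 1) ^ 2 ∂ℙ = ((l : ℝ) - b) / b := by
    intro j
    have hl : (l : ℝ) ≠ 0 := Nat.cast_ne_zero.mpr j.pos.ne'
    have hpj : (ℙ : Measure Ω).real {ω | S ω j j = 1} = (b : ℝ) / l := by
      rw [measureReal_def, hp j, ENNReal.toReal_ofReal (by positivity)]
    rw [← inv_div (b : ℝ) l,
      integral_inv_mul_sub_one_sq ℙ (hmeas j j) (h01 · j) hpj (by positivity), inv_div]
    field_simp
  calc _ ≤ ∫ ω, ζ ^ 2 * κ ^ 2 * err ω ∂ℙ :=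
        integral_mono_of_nonneg (.of_forall fun _ => frobSq_nonneg _)
          ((integrable_finsetSum _ fun j _ => hint j).const_mul _) (.of_forall hpoint)
    _ = _ := by
      rw [integral_const_mul, integral_finsetSum _ fun j _ => hint j]
      simp only [hvar, Finset.sum_const, Finset.card_univ, Fintype.card_fin, nsmul_eq_mul]
      ring

/-- Variance bound for the mini-batch stochastic gradient: if `‖Xᵀ‖_F² ≤ ζ²` and
`‖XW − Y‖_F² ≤ κ²`, and `S` is a random diagonal sampling matrix with i.i.d. `Bernoulli(b/l)`
diagonal entries, then
`E[‖(l/b) Xᵀ Sᵀ S (XW − Y) − Xᵀ(XW − Y)‖_F²] ≤ (l(l−b)/b) ζ² κ²`. -/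
theorem stmt7 {Ω : Type*} [MeasureSpace Ω] [IsProbabilityMeasure (ℙ : Measure Ω)]
    {l d o b : ℕ} (hb : 0 < b) (hbl : b ≤ l)
    (X : Matrix (Fin l) (Fin d) ℝ) (Y : Matrix (Fin l) (Fin o) ℝ)
    (W : Matrix (Fin d) (Fin o) ℝ) (ζ κ : ℝ)
    (hX : frobSq Xᵀ ≤ ζ ^ 2) (hXWY : frobSq (X * W - Y) ≤ κ ^ 2)
    (S : Ω → Matrix (Fin l) (Fin l) ℝ)
    (hmeas : ∀ i j, Measurable fun ω => S ω i j)
    (hdiag : ∀ ω, ∀ i j, i ≠ j → S ω i j = 0)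
    (h01 : ∀ ω j, S ω j j = 0 ∨ S ω j j = 1)
    (hp : ∀ j, ℙ {ω | S ω j j = 1} = ENNReal.ofReal ((b : ℝ) / l))
    (hindep : iIndepFun
      (fun j ω => S ω j j) ℙ) :
    (∫ ω, frobSq (((l : ℝ) / b) • (Xᵀ * ((S ω)ᵀ * S ω) * (X * W - Y))
        - Xᵀ * (X * W - Y)) ∂ℙ)
      ≤ ((l : ℝ) * ((l : ℝ) - b) / b) * (ζ ^ 2 * κ ^ 2) :=
  stmt7_general hb X Y W ζ κ hX hXWY S hmeas hdiag h01 hp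
end

section
/- Let X ∈ ℝ^{m×d}, Y ∈ ℝ^{m×o}, W ∈ ℝ^{d×o}, σ² > 0, and set σ² = ∑ᵢ σᵢ². Let G ∈ ℝ^{c×m} have i.i.d. N(0,1) entries and N ∈ ℝ^{c×d} have i.i.d. N(0,σ²) entries, independent of G. Define X̃ = GX + N, Ỹ = GY. Then E[(1/c)·X̃ᵀ(X̃W − Ỹ) − σ²W] = Xᵀ(XW − Y); i.e., the coded-data gradient with the make-up term −σ²W is an unbiased estimate of the true gradient. -/
open MeasureTheory ProbabilityTheory Matrix

/-!
Write `X̃ = M A` and `X̃ W - Ỹ = M A'` with `M = [G | N]`, `A = [X; 1]` and `A' = [X W - Y; W]`.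
The entries of each row of `M` are independent and centred, with variance `1` on the `G`-block
and `σ²` on the `N`-block, so `E[Mᵀ M] = c • diagonal (1, σ²)`. Hence
`E[(1/c) X̃ᵀ (X̃ W - Ỹ)] = Aᵀ diagonal (1, σ²) A' = Xᵀ (X W - Y) + σ² W`.
-/

theorem transpose_mul_mul_apply {κ ι α β R : Type*} [Fintype κ] [Fintype ι] [CommSemiring R]
    (M : Matrix κ ι R) (A : Matrix ι α R) (A' : Matrix ι β R) (i : α) (j : β) :
    ((M * A)ᵀ * (M * A')) i j = ∑ k, (∑ a, A a i * M k a) * (∑ a, A' a j * M k a) := by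
  simp only [mul_apply, transpose_apply, mul_comm (A _ _), mul_comm (A' _ _)]

theorem fromRows_transpose_mul_diagonal_mul_fromRows {m₁ m₂ n n' R : Type*} [Fintype m₁]
    [Fintype m₂] [DecidableEq m₁] [DecidableEq m₂] [CommRing R]
    (A₁ : Matrix m₁ n R) (A₂ : Matrix m₂ n R) (B₁ : Matrix m₁ n' R) (B₂ : Matrix m₂ n' R)
    (d₁ : m₁ → R) (d₂ : m₂ → R) :
    (fromRows A₁ A₂)ᵀ * diagonal (Sum.elim d₁ d₂) * fromRows B₁ B₂
      = A₁ᵀ * diagonal d₁ * B₁ + A₂ᵀ * diagonal d₂ * B₂ := by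
  rw [transpose_fromRows, ← fromBlocks_diagonal, fromCols_mul_fromBlocks, fromCols_mul_fromRows]
  simp

section

variable {Ω : Type*} {mΩ : MeasurableSpace Ω} {P : Measure Ω}

theorem integral_sum_mul_sum_of_indepFun [IsProbabilityMeasure P] {ι : Type*} [Fintype ι]
    {Z : ι → Ω → ℝ}
    (hZ : ∀ a, MemLp (Z a) 2 P) (hmean : ∀ a, P[Z a] = 0)
    (hindep : Pairwise fun a b => IndepFun (Z a) (Z b) P) (α β : ι → ℝ) :
    ∫ ω, (∑ a, α a * Z a ω) * (∑ a, β a * Z a ω) ∂P = ∑ a, α a * β a * Var[Z a; P] := by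
  have hform : ∀ γ : ι → ℝ, MemLp (fun ω => ∑ a, γ a * Z a ω) 2 P := fun γ =>
    memLp_finsetSum _ fun a _ => (hZ a).const_mul (γ a)
  have hcentered : ∀ γ : ι → ℝ, P[fun ω => ∑ a, γ a * Z a ω] = 0 := fun γ => by
    rw [integral_finsetSum _ fun a _ => ((hZ a).integrable one_le_two).const_mul _]
    simp [integral_const_mul, hmean]
  calc ∫ ω, (∑ a, α a * Z a ω) * (∑ a, β a * Z a ω) ∂P
      = cov[fun ω => ∑ a, α a * Z a ω, fun ω => ∑ a, β a * Z a ω; P] := by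
        rw [covariance_eq_sub (hform α) (hform β), hcentered, hcentered, mul_zero, sub_zero]
        rfl
    _ = ∑ a, ∑ b, α a * β b * cov[Z a, Z b; P] := by
        rw [covariance_fun_sum_fun_sum (fun a => (hZ a).const_mul (α a))
          (fun b => (hZ b).const_mul (β b))]
        simp only [covariance_const_mul_left, covariance_const_mul_right, mul_assoc,
          mul_left_comm (β _)]
    _ = ∑ a, α a * β a * Var[Z a; P] := by
        refine Finset.sum_congr rfl fun a _ => ?_
        rw [Finset.sum_eq_single a (fun b _ hba => by
            rw [(hindep hba.symm).covariance_eq_zero (hZ a) (hZ b), mul_zero])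
          (by simp), covariance_self (hZ a).aestronglyMeasurable.aemeasurable]

theorem integral_sum_mul_sum_of_gaussianReal [IsProbabilityMeasure P] {ι : Type*} [Fintype ι]
    {Z : ι → Ω → ℝ} {s : ι → NNReal} (hZ : ∀ a, HasLaw (Z a) (gaussianReal 0 (s a)) P)
    (hindep : Pairwise fun a b => IndepFun (Z a) (Z b) P) (α β : ι → ℝ) :
    ∫ ω, (∑ a, α a * Z a ω) * (∑ a, β a * Z a ω) ∂P = ∑ a, α a * β a * s a := by
  rw [integral_sum_mul_sum_of_indepFun (fun a => (hZ a).hasGaussianLaw.memLp_two)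
    (fun a => by rw [(hZ a).integral_eq, integral_id_gaussianReal]) hindep]
  simp only [fun a => (hZ a).variance_eq, variance_id_gaussianReal]

theorem pairwise_indepFun_fromCols_apply {κ μ δ : Type*} {G : Ω → Matrix κ μ ℝ}
    {N : Ω → Matrix κ δ ℝ}
    (hindep : iIndepFun (fun (p : (κ × μ) ⊕ (κ × δ)) ω =>
      Sum.elim (fun q => G ω q.1 q.2) (fun q => N ω q.1 q.2) p) P)
    (k : κ) :
    Pairwise fun a b =>
      IndepFun (fun ω => fromCols (G ω) (N ω) k a) (fun ω => fromCols (G ω) (N ω) k b) P := by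
  have hrow a : (fun ω => fromCols (G ω) (N ω) k a) = fun ω => Sum.elim
      (fun q => G ω q.1 q.2) (fun q => N ω q.1 q.2) (Sum.map (Prod.mk k) (Prod.mk k) a) := by
    cases a <;> rfl
  intro a b hab
  rw [hrow, hrow]
  exact hindep.indepFun (((Prod.mk_right_injective k).sumMap (Prod.mk_right_injective k)).ne hab)

variable {κ ι α β : Type*} [Fintype κ] [Fintype ι] {M : Ω → Matrix κ ι ℝ}

theorem integrable_transpose_mul_apply (hM : ∀ k a, MemLp (fun ω => M ω k a) 2 P)
    (A : Matrix ι α ℝ) (A' : Matrix ι β ℝ) (i : α) (j : β) :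
    Integrable (fun ω => ((M ω * A)ᵀ * (M ω * A')) i j) P := by
  have hform k (γ : ι → ℝ) : MemLp (fun ω => ∑ a, γ a * M ω k a) 2 P :=
    memLp_finsetSum _ fun a _ => (hM k a).const_mul (γ a)
  simp only [transpose_mul_mul_apply]
  exact integrable_finsetSum _ fun k _ => (hform k _).integrable_mul (hform k _)

theorem integral_transpose_mul_apply [DecidableEq ι] [IsProbabilityMeasure P]
    {s : ι → NNReal} (hM : ∀ k a, HasLaw (fun ω => M ω k a) (gaussianReal 0 (s a)) P)
    (hindep : ∀ k, Pairwise fun a b => IndepFun (fun ω => M ω k a) (fun ω => M ω k b) P)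
    (A : Matrix ι α ℝ) (A' : Matrix ι β ℝ) (i : α) (j : β) :
    ∫ ω, ((M ω * A)ᵀ * (M ω * A')) i j ∂P
      = Fintype.card κ * (Aᵀ * diagonal (fun a => (s a : ℝ)) * A') i j := by
  have hmem k (γ : ι → ℝ) : MemLp (fun ω => ∑ a, γ a * M ω k a) 2 P :=
    memLp_finsetSum _ fun a _ => (hM k a).hasGaussianLaw.memLp_two.const_mul (γ a)
  have hint k : Integrable (fun ω => (∑ a, A a i * M ω k a) * ∑ a, A' a j * M ω k a) P :=
    (hmem k _).integrable_mul (hmem k _)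
  simp only [transpose_mul_mul_apply]
  rw [integral_finsetSum _ fun k _ => hint k]
  simp only [integral_sum_mul_sum_of_gaussianReal (hM _) (hindep _)]
  simp [mul_apply, diagonal, mul_assoc, mul_comm (s _ : ℝ)]

end

theorem stmt9_general {Ω : Type*} [MeasureSpace Ω] [IsProbabilityMeasure (ℙ : Measure Ω)]
    {c m d o : ℕ} (hc : 0 < c)
    (X : Matrix (Fin m) (Fin d) ℝ) (Y : Matrix (Fin m) (Fin o) ℝ)
    (W : Matrix (Fin d) (Fin o) ℝ)
    (v : NNReal)
    (G : Ω → Matrix (Fin c) (Fin m) ℝ) (N : Ω → Matrix (Fin c) (Fin d) ℝ)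
    (hGmeas : ∀ i j, Measurable fun ω => G ω i j)
    (hNmeas : ∀ i j, Measurable fun ω => N ω i j)
    (hGdist : ∀ i j, Measure.map (fun ω => G ω i j) ℙ = gaussianReal 0 1)
    (hNdist : ∀ i j, Measure.map (fun ω => N ω i j) ℙ = gaussianReal 0 v)
    (hindep : iIndepFun (m := fun _ : (Fin c × Fin m) ⊕ (Fin c × Fin d) =>
        (inferInstance : MeasurableSpace ℝ))
      (fun p ω => Sum.elim (fun q => G ω q.1 q.2) (fun q => N ω q.1 q.2) p) ℙ) :
    ∀ i j,
      (∫ ω, ((1 / (c : ℝ)) • ((G ω * X + N ω)ᵀ * ((G ω * X + N ω) * W - G ω * Y))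
          - (v : ℝ) • W) i j ∂ℙ)
        = (Xᵀ * (X * W - Y)) i j := by
  intro i j
  set M : Ω → Matrix (Fin c) (Fin m ⊕ Fin d) ℝ := fun ω => fromCols (G ω) (N ω)
  have hM : ∀ k a, HasLaw (fun ω => M ω k a)
      (gaussianReal 0 (Sum.elim (fun _ => 1) (fun _ => v) a)) ℙ := by
    rintro k (p | l)
    exacts [⟨(hGmeas k p).aemeasurable, hGdist k p⟩, ⟨(hNmeas k l).aemeasurable, hNdist k l⟩]
  have hX ω : G ω * X + N ω = M ω * fromRows X (1 : Matrix (Fin d) (Fin d) ℝ) := by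
    rw [fromCols_mul_fromRows, Matrix.mul_one]
  have hres ω : (G ω * X + N ω) * W - G ω * Y = M ω * fromRows (X * W - Y) W := by
    rw [fromCols_mul_fromRows, Matrix.add_mul, Matrix.mul_sub, Matrix.mul_assoc]
    abel
  simp_rw [hres, hX, Matrix.sub_apply, Matrix.smul_apply, smul_eq_mul]
  have hvar : (fun a : Fin m ⊕ Fin d => ((Sum.elim (fun _ => 1) (fun _ => v) a : NNReal) : ℝ))
      = Sum.elim (fun _ => 1) (fun _ => (v : ℝ)) := by
    ext (_ | _) <;> rfl
  rw [integral_sub ((integrable_transpose_mul_apply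
      (fun k a => (hM k a).hasGaussianLaw.memLp_two) _ _ i j).const_mul _) (integrable_const _),
    integral_const_mul, integral_const, integral_transpose_mul_apply hM
      (pairwise_indepFun_fromCols_apply hindep), hvar,
    fromRows_transpose_mul_diagonal_mul_fromRows]
  simp only [one_div, Fintype.card_fin, diagonal_one, Matrix.mul_one, transpose_one, one_mul,
    Matrix.add_apply, diagonal_mul, probReal_univ, smul_eq_mul]
  rw [inv_mul_cancel_left₀ (Nat.cast_ne_zero.2 hc.ne'), add_sub_cancel_right]

/-- Unbiasedness of the coded-data gradient with make-up term: with `X̃ = G X + N`,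
`Ỹ = G Y`, where `G` has i.i.d. `N(0,1)` entries and `N` has i.i.d. `N(0,σ²)` entries,
independent of each other, and `σ² = ∑ᵢ σᵢ²`,
`E[(1/c) X̃ᵀ (X̃ W − Ỹ) − σ² W] = Xᵀ (X W − Y)` entrywise. -/
theorem stmt9 {Ω : Type*} [MeasureSpace Ω] [IsProbabilityMeasure (ℙ : Measure Ω)]
    {c m d o nDev : ℕ} (hc : 0 < c)
    (X : Matrix (Fin m) (Fin d) ℝ) (Y : Matrix (Fin m) (Fin o) ℝ)
    (W : Matrix (Fin d) (Fin o) ℝ)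
    (σsq : Fin nDev → ℝ) (hσi : ∀ i, 0 < σsq i)
    (v : NNReal) (hv : (v : ℝ) = ∑ i, σsq i)
    (G : Ω → Matrix (Fin c) (Fin m) ℝ) (N : Ω → Matrix (Fin c) (Fin d) ℝ)
    (hGmeas : ∀ i j, Measurable fun ω => G ω i j)
    (hNmeas : ∀ i j, Measurable fun ω => N ω i j)
    (hGdist : ∀ i j, Measure.map (fun ω => G ω i j) ℙ = gaussianReal 0 1)
    (hNdist : ∀ i j, Measure.map (fun ω => N ω i j) ℙ = gaussianReal 0 v)
    (hindep : iIndepFun (m := fun _ : (Fin c × Fin m) ⊕ (Fin c × Fin d) =>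
        (inferInstance : MeasurableSpace ℝ))
      (fun p ω => Sum.elim (fun q => G ω q.1 q.2) (fun q => N ω q.1 q.2) p) ℙ) :
    ∀ i j,
      (∫ ω, ((1 / (c : ℝ)) • ((G ω * X + N ω)ᵀ * ((G ω * X + N ω) * W - G ω * Y))
          - (v : ℝ) • W) i j ∂ℙ)
        = (Xᵀ * (X * W - Y)) i j :=
  stmt9_general hc X Y W v G N hGmeas hNmeas hGdist hNdist hindep
end

section
/- Let 0 < μ₁ ≤ μ₂ ≤ … ≤ μ_N and ε₁ ≥ ε₂ ≥ … ≥ ε_N > 0. Define r_N* = μ_N ε_N and r_i* = r_{i+1}* − μᵢ ε_{i+1} + μᵢ εᵢ for i = N−1, …, 1. Then the contract {(εᵢ, rᵢ*)} satisfies individual rationality: rᵢ* − μᵢ εᵢ ≥ 0 for all i ∈ [N]. -/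
/-- Individual rationality of the recursively-defined contract rewards:
with `0 < μ₁ ≤ … ≤ μ_N`, `ε₁ ≥ … ≥ ε_N > 0`, `r_N* = μ_N ε_N` and
`r_i* = r_{i+1}* + μᵢ(εᵢ − ε_{i+1})`, every device gets non-negative utility:
`rᵢ* − μᵢ εᵢ ≥ 0`. -/
theorem stmt14 (N : ℕ) (hN : 0 < N) (μ ε r : Fin N → ℝ)
    (hμpos : ∀ i, 0 < μ i) (hμmono : ∀ i j : Fin N, i ≤ j → μ i ≤ μ j)
    (hεpos : ∀ i, 0 < ε i) (hεanti : ∀ i j : Fin N, i ≤ j → ε j ≤ ε i)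
    (hlast : r ⟨N - 1, by omega⟩ = μ ⟨N - 1, by omega⟩ * ε ⟨N - 1, by omega⟩)
    (hrec : ∀ (i : ℕ) (h : i + 1 < N),
      r ⟨i, by omega⟩ = r ⟨i + 1, h⟩
        + μ ⟨i, by omega⟩ * (ε ⟨i, by omega⟩ - ε ⟨i + 1, h⟩)) :
    ∀ i : Fin N, 0 ≤ r i - μ i * ε i := by
  have key : ∀ d : ℕ, ∀ h : d < N,
      0 ≤ r ⟨N - 1 - d, by omega⟩ - μ ⟨N - 1 - d, by omega⟩ * ε ⟨N - 1 - d, by omega⟩ := by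
    intro d
    induction d with
    | zero =>
      intro h
      simp only [Nat.sub_zero]
      rw [hlast]; ring_nf; exact le_refl _
    | succ d ih =>
      intro h
      have hd : d < N := by omega
      have hi : N - 1 - (d + 1) + 1 < N := by omega
      have hidx : N - 1 - (d + 1) + 1 = N - 1 - d := by omega
      have hprev := ih hd
      have hr := hrec (N - 1 - (d + 1)) hi
      set i : Fin N := ⟨N - 1 - (d + 1), by omega⟩
      have hj : (⟨N - 1 - (d + 1) + 1, hi⟩ : Fin N) = ⟨N - 1 - d, by omega⟩ := by
        simp [hidx]
      rw [hj] at hr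
      set j : Fin N := ⟨N - 1 - d, by omega⟩
      have hij : i ≤ j := by simp [i, j, Fin.le_def]; omega
      have h1 : μ i ≤ μ j := hμmono i j hij
      have h2 : 0 < ε j := hεpos j
      calc (0:ℝ) ≤ r j - μ j * ε j := hprev
        _ ≤ r j - μ i * ε j := by nlinarith
        _ = r i - μ i * ε i := by rw [hr]; ring
  intro i
  have hd : N - 1 - (N - 1 - i.1) = i.1 := by omega
  have := key (N - 1 - i.1) (by omega)
  have heq : (⟨N - 1 - (N - 1 - i.1), by omega⟩ : Fin N) = i := by
    simp [hd]
  rwa [heq] at this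
end
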